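/- arXiv:1503.06639 — 4 statements merged into one kernel-verified Lean document; each statement's English description precedes it below -/
import Mathlib

section
/- Let f in K[X_1,...,X_n] be a nonzero polynomial of degree d, let u, v in K^n, and suppose there are at least N distinct scalars \lambda in K such that u + \lambda v is a zero of f of multiplicity at least r, where d \leq rN - 1. Then the univariate polynomial \lambda \mapsto f(u + \lambda v) is identically zero. -/
/-!
The coefficient of `λ ^ k` in `f (w + λ v)` is `∑_{|j| = k} v ^ j (∂^j f)(w)` (Taylor expansion
with Hasse derivatives), so `λ ^ r` divides `f (w + λ v)` when `w` is a zero of multiplicity `≥ r`.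
Shifting `λ` by `t`, every `t ∈ Λ` gives `(λ - t) ^ r ∣ f (u + λ v)`; as this polynomial has
degree at most `deg f < r N ≤ r |Λ|`, it vanishes.
-/

open MvPolynomial

/-- The multivariate Hasse derivative `∂^j`. -/
noncomputable def mvHasseDeriv {K : Type*} [CommSemiring K] {n : ℕ} (j : Fin n →₀ ℕ)
    (f : MvPolynomial (Fin n) K) : MvPolynomial (Fin n) K :=
  (AddMonoidAlgebra.coeff f).sum fun c a => monomial (c - j) (((∏ i ∈ j.support, (c i).choose (j i) : ℕ) : K) * a)

namespace Polynomial

theorem coeff_prod_eq_sum_finsuppAntidiag {R ι : Type*} [CommSemiring R] [DecidableEq ι]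
    (s : Finset ι) (f : ι → R[X]) (k : ℕ) :
    (∏ i ∈ s, f i).coeff k = ∑ l ∈ s.finsuppAntidiag k, ∏ i ∈ s, (f i).coeff (l i) := by
  rw [← coeff_coe, ← coeToPowerSeries.ringHom_apply, map_prod, PowerSeries.coeff_prod]
  simp only [coeToPowerSeries.ringHom_apply, coeff_coe]

theorem coeff_C_add_X_mul_C_pow {R : Type*} [CommSemiring R] (a b : R) (m k : ℕ) :
    ((C a + X * C b) ^ m).coeff k = m.choose k * a ^ (m - k) * b ^ k := by
  have hcomp : (C a + X * C b) ^ m = ((X + C a) ^ m).comp (C b * X) := by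
    rw [pow_comp, add_comp, X_comp, C_comp]
    ring
  rw [hcomp, comp_C_mul_X_coeff, coeff_X_add_C_pow]
  ring

theorem eq_zero_of_forall_X_sub_C_pow_dvd {R : Type*} [CommRing R] [IsDomain R] {p : R[X]}
    {r : ℕ} (s : Finset R) (hdvd : ∀ t ∈ s, (X - C t) ^ r ∣ p)
    (hdeg : p.natDegree < r * s.card) :
    p = 0 := by
  classical
  by_contra hp
  have hroots : r • s.val ≤ p.roots := by
    refine Multiset.le_iff_count.2 fun t => ?_
    rw [Multiset.count_nsmul, count_roots]
    by_cases ht : t ∈ s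
    · rw [Multiset.count_eq_one_of_mem s.nodup ht, mul_one]
      exact (le_rootMultiplicity_iff hp).2 (hdvd t ht)
    · simp [Multiset.count_eq_zero.2 ht]
  have hcard : r * s.card ≤ p.natDegree := by
    simpa only [Multiset.card_nsmul, Finset.card_val] using
      (Multiset.card_le_card hroots).trans p.card_roots'
  exact hdeg.not_ge hcard

end Polynomial

theorem eval_mvHasseDeriv {K : Type*} [CommSemiring K] {n : ℕ} (j : Fin n →₀ ℕ)
    (f : MvPolynomial (Fin n) K) (w : Fin n → K) :
    eval w (mvHasseDeriv j f) =
      ∑ c ∈ f.support, coeff c f * ∏ i, ((c i).choose (j i) * w i ^ (c i - j i)) := by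
  have hchoose (c : Fin n →₀ ℕ) :
      ∏ i ∈ j.support, ((c i).choose (j i) : K) = ∏ i, ((c i).choose (j i) : K) :=
    Finset.prod_subset j.support.subset_univ fun i _ hi => by
      simp [Finsupp.notMem_support_iff.mp hi]
  have hsum : mvHasseDeriv j f = ∑ c ∈ f.support,
      monomial (c - j) (((∏ i ∈ j.support, (c i).choose (j i) : ℕ) : K) * coeff c f) := rfl
  simp only [hsum, map_sum, eval_monomial,
    Finsupp.prod_fintype _ _ fun i => pow_zero (w i), Finsupp.tsub_apply, Nat.cast_prod,
    hchoose, Finset.prod_mul_distrib]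
  refine Finset.sum_congr rfl fun c _ => ?_
  ring

open Polynomial in
theorem coeff_aeval_C_add_X_mul_C {K : Type*} [CommSemiring K] {n : ℕ}
    (f : MvPolynomial (Fin n) K) (w v : Fin n → K) (k : ℕ) :
    (aeval (fun i => Polynomial.C (w i) + Polynomial.X * Polynomial.C (v i)) f).coeff k =
      ∑ j ∈ Finset.univ.finsuppAntidiag k, (∏ i, v i ^ j i) * eval w (mvHasseDeriv j f) := by
  simp only [aeval_eq_eval₂Hom, coe_eval₂Hom, eval₂_eq', finsetSum_coeff,
    Polynomial.algebraMap_eq, Polynomial.coeff_C_mul, coeff_prod_eq_sum_finsuppAntidiag,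
    coeff_C_add_X_mul_C_pow, eval_mvHasseDeriv, Finset.mul_sum]
  rw [Finset.sum_comm]
  refine Finset.sum_congr rfl fun j _ => Finset.sum_congr rfl fun c _ => ?_
  simp only [Finset.prod_mul_distrib]
  ring

open Polynomial in
theorem natDegree_aeval_le_totalDegree {R σ : Type*} [CommSemiring R] (x : σ → R[X])
    (hx : ∀ i, (x i).natDegree ≤ 1) (f : MvPolynomial σ R) :
    (aeval x f).natDegree ≤ f.totalDegree := by
  rw [aeval_eq_eval₂Hom, coe_eval₂Hom, eval₂_eq]
  refine natDegree_sum_le_of_forall_le _ _ fun c hc => ?_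
  refine (natDegree_C_mul_le _ _).trans <| (natDegree_prod_le _ _).trans <| ?_
  refine le_trans (Finset.sum_le_sum fun i _ => ?_) (le_totalDegree hc)
  simpa using natDegree_pow_le_of_le (c i) (hx i)

open Polynomial in
theorem aeval_C_add_X_mul_C_comp_X_add_C {R σ : Type*} [CommSemiring R]
    (f : MvPolynomial σ R) (u v : σ → R) (t : R) :
    (aeval (fun i => Polynomial.C (u i) + Polynomial.X * Polynomial.C (v i)) f).comp
        (Polynomial.X + Polynomial.C t) =
      aeval (fun i => Polynomial.C (u i + t * v i) + Polynomial.X * Polynomial.C (v i)) f := by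
  rw [comp_eq_aeval, comp_aeval_apply]
  congr 2
  funext i
  simp only [map_add, map_mul, Polynomial.aeval_X, Polynomial.aeval_C, Polynomial.algebraMap_eq]
  ring

theorem X_pow_dvd_aeval_C_add_X_mul_C {K : Type*} [CommSemiring K] {n r : ℕ}
    (f : MvPolynomial (Fin n) K) (w v : Fin n → K)
    (hw : ∀ j : Fin n →₀ ℕ, ∑ i, j i < r → eval w (mvHasseDeriv j f) = 0) :
    Polynomial.X ^ r ∣
      aeval (fun i => Polynomial.C (w i) + Polynomial.X * Polynomial.C (v i)) f := by
  refine Polynomial.X_pow_dvd_iff.2 fun k hk => ?_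
  rw [coeff_aeval_C_add_X_mul_C]
  refine Finset.sum_eq_zero fun j hj => ?_
  rw [hw j ((Finset.mem_finsuppAntidiag.1 hj).1 ▸ hk), mul_zero]

theorem restriction_to_line_eq_zero_general {K : Type*} [Field K] {n r N d : ℕ}
    (f : MvPolynomial (Fin n) K) (hdeg : f.totalDegree = d)
    (hdN : d < r * N) (u v : Fin n → K) (Λ : Finset K) (hΛ : N ≤ Λ.card)
    (hmult : ∀ t ∈ Λ, ∀ j : Fin n →₀ ℕ, (∑ i, j i) < r →
      eval (fun i => u i + t * v i) (mvHasseDeriv j f) = 0) :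
    aeval (fun i => Polynomial.C (u i) + Polynomial.X * Polynomial.C (v i)) f =
      (0 : Polynomial K) := by
  refine Polynomial.eq_zero_of_forall_X_sub_C_pow_dvd (r := r) Λ (fun t ht => ?_) ?_
  · rw [Polynomial.X_sub_C_pow_dvd_iff, aeval_C_add_X_mul_C_comp_X_add_C]
    exact X_pow_dvd_aeval_C_add_X_mul_C f _ v (hmult t ht)
  · have hline (i : Fin n) :
        (Polynomial.C (u i) + Polynomial.X * Polynomial.C (v i)).natDegree ≤ 1 := by
      compute_degree
    calc _ ≤ f.totalDegree := natDegree_aeval_le_totalDegree _ hline f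
      _ < r * N := hdeg ▸ hdN
      _ ≤ r * Λ.card := Nat.mul_le_mul_left r hΛ

/-- If `f ≠ 0` has degree `d ≤ rN - 1` and there are at least `N` scalars `λ` such that
`u + λ v` is a zero of `f` of multiplicity at least `r`, then the univariate polynomial
`λ ↦ f(u + λ v)` is identically zero. -/
theorem restriction_to_line_eq_zero {K : Type*} [Field K] {n r N d : ℕ}
    (f : MvPolynomial (Fin n) K) (hf : f ≠ 0) (hdeg : f.totalDegree = d)
    (hdN : d < r * N) (u v : Fin n → K) (Λ : Finset K) (hΛ : N ≤ Λ.card)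
    (hmult : ∀ t ∈ Λ, ∀ j : Fin n →₀ ℕ, (∑ i, j i) < r →
      eval (fun i => u i + t * v i) (mvHasseDeriv j f) = 0) :
    aeval (fun i => Polynomial.C (u i) + Polynomial.X * Polynomial.C (v i)) f =
      (0 : Polynomial K) :=
  restriction_to_line_eq_zero_general f hdeg hdN u v Λ hΛ hmult
end

section
/- Let K be a field, D a set of directions in PG_{n-1}(K) (one-dimensional subspaces of K^n), L a finite set of affine lines in K^n whose directions lie in D, and S a finite set of points such that every line of L contains at least N points of S; assume moreover that for every direction in D there is a line of L with that direction. Let r \geq 1 and let U be a subspace of polynomials of K[X_1,...,X_n] of total degree at most rN-1 such that for every nonzero f in U, the top-degree homogeneous part f* does not vanish to multiplicity r at every point of D (viewed as nonzero vectors v spanning the directions). Then \binom{2r+n-2}{n} |S| \geq dim U. -/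
/-!
If `dim U` exceeded `binom(2r+n-2, n) |S|`, linear algebra would give a nonzero `f ∈ U` whose
Hasse derivatives of weight `≤ 2r-2` all vanish on `S`. Take `|j| < r` and a line `u + T v` of
`L`. By Taylor's formula, `∂^j f` still vanishes to order `≥ r` at each of the `≥ N` points of `S`
on the line, so its restriction `T ↦ (∂^j f)(u + T v)` has `≥ N` roots of multiplicity `≥ r`
while its degree is `< rN`. Hence it is zero, and so is its top coefficient `(∂^j f*)(v)`,
contradicting the hypothesis on `U`.
-/

open MvPolynomial

theorem MvPolynomial.degree_le_totalDegree {σ R : Type*} [CommSemiring R] {m : σ →₀ ℕ}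
    {f : MvPolynomial σ R} (h : m ∈ f.support) : m.degree ≤ f.totalDegree :=
  le_totalDegree h

theorem Finsupp.prod_map_toMultiset {α M : Type*} [CommMonoid M] (c : α →₀ ℕ) (g : α → M) :
    (c.toMultiset.map g).prod = c.prod fun a k => g a ^ k := by
  rw [Finsupp.toMultiset_map, Finsupp.prod_toMultiset,
    Finsupp.prod_mapDomain_index (fun _ => pow_zero _) (fun _ _ _ => pow_add _ _ _)]

theorem MvPolynomial.pow_dvd_aeval_mul {σ R S : Type*} [CommSemiring R] [CommSemiring S]
    [Algebra R S] (w : σ → S) (p : S) {m : ℕ} {g : MvPolynomial σ R} (hg : ∀ c ∈ g.support, m ≤ c.degree) :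
    p ^ m ∣ aeval (fun i => w i * p) g := by
  conv_rhs => rw [g.as_sum, map_sum]
  refine Finset.dvd_sum fun c hc => ?_
  simp_rw [aeval_monomial, mul_pow]
  rw [Finsupp.prod_mul, Finsupp.prod, Finsupp.prod, Finset.prod_pow_eq_pow_sum]
  exact Dvd.dvd.mul_left (Dvd.dvd.mul_left (pow_dvd_pow p (hg c hc)) _) _

theorem Polynomial.eq_zero_of_forall_pow_dvd_of_natDegree_lt {R : Type*} [CommRing R] [IsDomain R]
    {q : Polynomial R} {Λ : Finset R} {m : ℕ}
    (h : ∀ t ∈ Λ, (Polynomial.X - Polynomial.C t) ^ m ∣ q) (hq : q.natDegree < m * Λ.card) :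
    q = 0 := by
  classical
  by_contra hq0
  have hroots : m • Λ.val ≤ q.roots := Multiset.le_iff_count.mpr fun t => by
    rw [Multiset.count_nsmul, Polynomial.count_roots]
    by_cases ht : t ∈ Λ
    · rw [Multiset.count_eq_one_of_mem Λ.nodup ht, mul_one]
      exact (Polynomial.le_rootMultiplicity_iff hq0).mpr (h t ht)
    · rw [Multiset.count_eq_zero_of_notMem ht, mul_zero]
      exact Nat.zero_le _
  have := (Multiset.card_le_card hroots).trans (Polynomial.card_roots' q)
  rw [Multiset.card_nsmul, Finset.card_val] at this
  omega

theorem natCard_degree_le_le_choose (n k : ℕ) :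
    Nat.card {j : Fin n →₀ ℕ // j.degree ≤ k} ≤ (k + n).choose n := by
  classical
  let slack : {j : Fin n →₀ ℕ // j.degree ≤ k} →
      (Finset.univ : Finset (Fin (n + 1))).finsuppAntidiag k := fun j =>
    ⟨Finsupp.equivFunOnFinite.symm (Fin.snoc (⇑j.1) (k - j.1.degree)), by
      rw [Finset.mem_finsuppAntidiag]
      refine ⟨?_, Finset.subset_univ _⟩
      have := j.2
      simp only [Finsupp.coe_equivFunOnFinite_symm, Fin.sum_univ_castSucc, Fin.snoc_castSucc,
        Fin.snoc_last, ← Finsupp.degree_eq_sum]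
      omega⟩
  have hslack : Function.Injective slack := fun j₁ j₂ h => Subtype.ext <| Finsupp.ext fun i => by
    simpa [slack] using congrArg (fun x => x.1 (Fin.castSucc i)) h
  calc Nat.card {j : Fin n →₀ ℕ // j.degree ≤ k}
      ≤ Nat.card ((Finset.univ : Finset (Fin (n + 1))).finsuppAntidiag k) :=
        Nat.card_le_card_of_injective slack hslack
    _ = (k + n).choose n := by
        rw [Nat.card_eq_finsetCard, Finset.card_finsuppAntidiag_nat_eq_choose, Finset.card_univ,
          Fintype.card_fin, Nat.add_right_comm, Nat.add_sub_cancel, add_comm n,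
          Nat.choose_symm_add]

section HasseDeriv

variable {K : Type*} [CommSemiring K] {n : ℕ}

theorem mvHasseDeriv_eq_sum (j : Fin n →₀ ℕ) (f : MvPolynomial (Fin n) K) :
    mvHasseDeriv j f =
      ∑ c ∈ f.support, monomial (c - j) (((∏ i, (c i).choose (j i) : ℕ) : K) * coeff c f) := by
  refine Finset.sum_congr rfl fun c _ => ?_
  dsimp only
  rw [Finset.prod_subset (Finset.subset_univ j.support) fun i _ hi => by
    rw [Finsupp.notMem_support_iff.mp hi, Nat.choose_zero_right]]
  rfl

theorem prod_choose_eq_zero_of_not_le {j c : Fin n →₀ ℕ} (h : ¬j ≤ c) :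
    ∏ i, (c i).choose (j i) = 0 := by
  obtain ⟨i, hi⟩ : ∃ i, c i < j i := by simpa [Finsupp.le_def] using h
  exact Finset.prod_eq_zero (Finset.mem_univ i) (Nat.choose_eq_zero_of_lt hi)

theorem coeff_mvHasseDeriv (j m : Fin n →₀ ℕ) (f : MvPolynomial (Fin n) K) :
    coeff m (mvHasseDeriv j f) =
      ((∏ i, ((m + j) i).choose (j i) : ℕ) : K) * coeff (m + j) f := by
  classical
  rw [mvHasseDeriv_eq_sum, coeff_sum]
  simp_rw [coeff_monomial]
  rw [Finset.sum_eq_single (m + j), if_pos (add_tsub_cancel_right m j)]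
  · rintro c - hc
    split_ifs with hcm
    · have hjc : ¬j ≤ c := fun hjc => hc (by rw [← hcm, tsub_add_cancel_of_le hjc])
      rw [prod_choose_eq_zero_of_not_le hjc, Nat.cast_zero, zero_mul]
    · rfl
  · intro h
    rw [notMem_support_iff.mp h, mul_zero, ite_self]

theorem mvHasseDeriv_add (j : Fin n →₀ ℕ) (f g : MvPolynomial (Fin n) K) :
    mvHasseDeriv j (f + g) = mvHasseDeriv j f + mvHasseDeriv j g := by
  ext m
  simp only [coeff_add, coeff_mvHasseDeriv, mul_add]

theorem mvHasseDeriv_smul (j : Fin n →₀ ℕ) (a : K) (f : MvPolynomial (Fin n) K) :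
    mvHasseDeriv j (a • f) = a • mvHasseDeriv j f := by
  ext m
  simp only [coeff_smul, coeff_mvHasseDeriv, smul_eq_mul, mul_left_comm]

noncomputable def mvHasseDerivₗ (j : Fin n →₀ ℕ) :
    MvPolynomial (Fin n) K →ₗ[K] MvPolynomial (Fin n) K where
  toFun := mvHasseDeriv j
  map_add' := mvHasseDeriv_add j
  map_smul' := mvHasseDeriv_smul j

theorem mvHasseDeriv_mvHasseDeriv (e j : Fin n →₀ ℕ) (f : MvPolynomial (Fin n) K) :
    mvHasseDeriv e (mvHasseDeriv j f) =
      ((∏ i, ((e + j) i).choose (j i) : ℕ) : K) • mvHasseDeriv (e + j) f := by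
  ext m
  rw [coeff_smul, coeff_mvHasseDeriv, coeff_mvHasseDeriv, coeff_mvHasseDeriv, smul_eq_mul,
    ← mul_assoc, ← mul_assoc, ← Nat.cast_mul, ← Nat.cast_mul, ← Finset.prod_mul_distrib,
    ← Finset.prod_mul_distrib, add_assoc]
  congr 3 with i
  simp only [Finsupp.add_apply]
  have h := Nat.choose_mul (n := m i + e i + j i) (k := e i + j i) (s := j i) (by omega)
  rw [show m i + e i + j i - j i = m i + e i by omega, Nat.add_sub_cancel] at h
  rw [← add_assoc, mul_comm, ← h, mul_comm]

theorem coeff_prod_X_add_C_pow (b : Fin n → K) (c j : Fin n →₀ ℕ) :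
    coeff j (∏ i, (X i + C (b i)) ^ c i) =
      ((∏ i, (c i).choose (j i) : ℕ) : K) * ∏ i, b i ^ (c i - j i) := by
  classical
  have hind : ∀ x : Fin n → ℕ, j = Finsupp.indicator Finset.univ (fun i _ => x i) ↔ ⇑j = x :=
    fun x => by simp [Finsupp.ext_iff, funext_iff]
  simp_rw [add_pow, Finset.prod_univ_sum, coeff_sum, Finset.prod_mul_distrib, ← map_pow,
    ← map_natCast (C : K →+* MvPolynomial (Fin n) K), ← map_prod, mul_assoc, ← map_mul,
    mul_comm _ (C _), coeff_C_mul, coeff_prod_X_pow, hind]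
  rw [Finset.sum_eq_single (⇑j) (fun x _ hx => by rw [if_neg (Ne.symm hx), mul_zero]),
    if_pos rfl, mul_one, ← Nat.cast_prod, mul_comm]
  intro hjc
  replace hjc : ¬j ≤ c := by simpa [Fintype.mem_piFinset, Nat.lt_succ_iff, Finsupp.le_def] using hjc
  rw [← Nat.cast_prod, prod_choose_eq_zero_of_not_le hjc, Nat.cast_zero, mul_zero, zero_mul]

theorem eval_mvHasseDeriv_s5 (b : Fin n → K) (j : Fin n →₀ ℕ) (f : MvPolynomial (Fin n) K) :
    eval b (mvHasseDeriv j f) = coeff j (aeval (fun i => X i + C (b i)) f) := by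
  conv_rhs => rw [f.as_sum]
  rw [mvHasseDeriv_eq_sum, map_sum, map_sum, coeff_sum]
  refine Finset.sum_congr rfl fun c _ => ?_
  rw [eval_monomial, aeval_monomial, algebraMap_eq, coeff_C_mul, Finsupp.prod_fintype _ _ (by simp),
    Finsupp.prod_fintype _ _ (by simp), coeff_prod_X_add_C_pow]
  simp only [Finsupp.tsub_apply]
  ring

theorem add_mem_support_of_mem_support_mvHasseDeriv {j m : Fin n →₀ ℕ}
    {f : MvPolynomial (Fin n) K} (h : m ∈ (mvHasseDeriv j f).support) : m + j ∈ f.support := by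
  rw [mem_support_iff, coeff_mvHasseDeriv] at h
  exact mem_support_iff.mpr (right_ne_zero_of_mul h)

theorem totalDegree_mvHasseDeriv_le (j : Fin n →₀ ℕ) (f : MvPolynomial (Fin n) K) :
    (mvHasseDeriv j f).totalDegree ≤ f.totalDegree - j.degree := by
  refine Finset.sup_le fun m hm => ?_
  have := degree_le_totalDegree (add_mem_support_of_mem_support_mvHasseDeriv hm)
  rw [map_add] at this
  exact Nat.le_sub_of_add_le this

theorem mvHasseDeriv_eq_zero_of_totalDegree_lt {j : Fin n →₀ ℕ} {f : MvPolynomial (Fin n) K}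
    (h : f.totalDegree < j.degree) : mvHasseDeriv j f = 0 := by
  refine eq_zero_iff.mpr fun m => notMem_support_iff.mp fun hm => ?_
  have := degree_le_totalDegree (add_mem_support_of_mem_support_mvHasseDeriv hm)
  rw [map_add] at this
  omega

theorem homogeneousComponent_mvHasseDeriv (e : ℕ) (j : Fin n →₀ ℕ) (f : MvPolynomial (Fin n) K) :
    homogeneousComponent e (mvHasseDeriv j f) =
      mvHasseDeriv j (homogeneousComponent (e + j.degree) f) := by
  ext m
  simp only [coeff_homogeneousComponent, coeff_mvHasseDeriv, map_add, add_left_inj, mul_ite,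
    mul_zero]

def VanishesTo (f : MvPolynomial (Fin n) K) (s : Fin n → K) (m : ℕ) : Prop :=
  ∀ j : Fin n →₀ ℕ, j.degree < m → eval s (mvHasseDeriv j f) = 0

theorem VanishesTo.mono {f : MvPolynomial (Fin n) K} {s : Fin n → K} {m m' : ℕ}
    (h : VanishesTo f s m) (hm : m' ≤ m) : VanishesTo f s m' :=
  fun j hj => h j (hj.trans_le hm)

theorem vanishesTo_mvHasseDeriv {f : MvPolynomial (Fin n) K} {s : Fin n → K} {m : ℕ}
    (h : VanishesTo f s m) (j : Fin n →₀ ℕ) : VanishesTo (mvHasseDeriv j f) s (m - j.degree) :=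
  fun e he => by
    rw [mvHasseDeriv_mvHasseDeriv, smul_eval, h (e + j) (by rw [map_add]; omega), mul_zero]

end HasseDeriv

section RestrictToLine

variable {K : Type*} [CommSemiring K] {n : ℕ}

noncomputable def restrictToLine (u v : Fin n → K) : MvPolynomial (Fin n) K →ₐ[K] Polynomial K :=
  aeval fun i => Polynomial.C (v i) * Polynomial.X + Polynomial.C (u i)

theorem restrictToLine_monomial (u v : Fin n → K) (c : Fin n →₀ ℕ) (a : K) :
    restrictToLine u v (monomial c a) =
      Polynomial.C a * (c.toMultiset.map fun i =>
        Polynomial.C (v i) * Polynomial.X + Polynomial.C (u i)).prod := by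
  rw [restrictToLine, aeval_monomial, Finsupp.prod_map_toMultiset]
  rfl

theorem natDegree_restrictToLine_monomial_le (u v : Fin n → K) (c : Fin n →₀ ℕ) (a : K) :
    (restrictToLine u v (monomial c a)).natDegree ≤ c.degree := by
  rw [restrictToLine_monomial]
  refine (Polynomial.natDegree_C_mul_le _ _).trans <|
    (Polynomial.natDegree_multiset_prod_le _).trans ?_
  refine (Multiset.sum_le_card_nsmul _ 1 fun d hd => ?_).trans_eq ?_
  · obtain ⟨_, hp, rfl⟩ := Multiset.mem_map.mp hd
    obtain ⟨i, -, rfl⟩ := Multiset.mem_map.mp hp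
    exact Polynomial.natDegree_linear_le
  · rw [Multiset.card_map, Multiset.card_map, smul_eq_mul, mul_one]
    exact Finsupp.card_toMultiset c

theorem coeff_restrictToLine_monomial (u v : Fin n → K) (c : Fin n →₀ ℕ) (a : K) :
    (restrictToLine u v (monomial c a)).coeff c.degree = eval v (monomial c a) := by
  rw [restrictToLine_monomial, Polynomial.coeff_C_mul, eval_monomial]
  have h := Polynomial.coeff_multiset_prod_of_natDegree_le
    (c.toMultiset.map fun i => Polynomial.C (v i) * Polynomial.X + Polynomial.C (u i)) 1
    fun p hp => by
      obtain ⟨i, -, rfl⟩ := Multiset.mem_map.mp hp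
      exact Polynomial.natDegree_linear_le
  rw [Multiset.card_map, Finsupp.card_toMultiset, mul_one, Multiset.map_map] at h
  rw [← Finsupp.prod_map_toMultiset c v]
  simp only [Function.comp_apply, Polynomial.coeff_add, Polynomial.coeff_C_mul_X,
    Polynomial.coeff_C, if_true, one_ne_zero, if_false, add_zero] at h
  exact congrArg (a * ·) h

theorem natDegree_restrictToLine_le (u v : Fin n → K) (f : MvPolynomial (Fin n) K) :
    (restrictToLine u v f).natDegree ≤ f.totalDegree := by
  conv_lhs => rw [f.as_sum, map_sum]
  exact Polynomial.natDegree_sum_le_of_forall_le _ _ fun c hc =>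
    (natDegree_restrictToLine_monomial_le u v c _).trans (degree_le_totalDegree hc)

theorem coeff_restrictToLine_of_totalDegree_le (u v : Fin n → K) {f : MvPolynomial (Fin n) K}
    {e : ℕ} (hf : f.totalDegree ≤ e) :
    (restrictToLine u v f).coeff e = eval v (homogeneousComponent e f) := by
  conv_lhs => rw [f.as_sum, map_sum]
  conv_rhs => rw [f.as_sum, map_sum, map_sum]
  rw [Polynomial.finsetSum_coeff]
  refine Finset.sum_congr rfl fun c hc => ?_
  rw [homogeneousComponent_of_mem (isHomogeneous_monomial _ rfl)]
  split_ifs with hce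
  · rw [hce, coeff_restrictToLine_monomial]
  · rw [map_zero, Polynomial.coeff_eq_zero_of_natDegree_lt]
    exact (natDegree_restrictToLine_monomial_le u v c _).trans_lt
      (lt_of_le_of_ne ((degree_le_totalDegree hc).trans hf) (Ne.symm hce))

theorem VanishesTo.pow_dvd_restrictToLine {K : Type*} [CommRing K] {n : ℕ}
    {f : MvPolynomial (Fin n) K} {u v : Fin n → K} {t : K} {m : ℕ}
    (h : VanishesTo f (u + t • v) m) :
    (Polynomial.X - Polynomial.C t) ^ m ∣ restrictToLine u v f := by
  -- `f (u + T v)` is the Taylor expansion of `f` at `u + t v`, evaluated at `(T - t) v`.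
  have hshift : restrictToLine u v f =
      aeval (fun i => Polynomial.C (v i) * (Polynomial.X - Polynomial.C t))
        (aeval (fun i => X i + C ((u + t • v) i)) f) := by
    rw [← AlgHom.comp_apply]
    refine DFunLike.congr_fun (algHom_ext fun i => ?_) f
    simp only [restrictToLine, AlgHom.comp_apply, aeval_X, map_add, aeval_C,
      Polynomial.algebraMap_eq, Pi.add_apply, Pi.smul_apply, smul_eq_mul, map_mul]
    ring
  rw [hshift]
  refine pow_dvd_aeval_mul _ _ fun c hc => not_lt.mp fun hlt => mem_support_iff.mp hc ?_
  rw [← eval_mvHasseDeriv_s5]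
  exact h c hlt

end RestrictToLine

section Kakeya

variable {K : Type*} [Field K] {n : ℕ}

theorem eval_mvHasseDeriv_homogeneousComponent_eq_zero {f : MvPolynomial (Fin n) K}
    {u v : Fin n → K} {Λ : Finset K} {r : ℕ}
    (hΛ : ∀ t ∈ Λ, VanishesTo f (u + t • v) (2 * r - 1)) (hdeg : f.totalDegree < r * Λ.card)
    {j : Fin n →₀ ℕ} (hj : j.degree < r) :
    eval v (mvHasseDeriv j (homogeneousComponent f.totalDegree f)) = 0 := by
  by_cases hjd : f.totalDegree < j.degree
  · rw [mvHasseDeriv_eq_zero_of_totalDegree_lt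
      (((homogeneousComponent_isHomogeneous _ f).totalDegree_le).trans_lt hjd), map_zero]
  have hfj := totalDegree_mvHasseDeriv_le j f
  have hline : restrictToLine u v (mvHasseDeriv j f) = 0 :=
    Polynomial.eq_zero_of_forall_pow_dvd_of_natDegree_lt (m := r)
      (fun t ht => ((vanishesTo_mvHasseDeriv (hΛ t ht) j).mono (by omega)).pow_dvd_restrictToLine)
      ((natDegree_restrictToLine_le u v _).trans_lt (by omega))
  have htop := coeff_restrictToLine_of_totalDegree_le u v hfj
  rwa [hline, Polynomial.coeff_zero, homogeneousComponent_mvHasseDeriv,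
    Nat.sub_add_cancel (not_lt.mp hjd), eq_comm] at htop

theorem finrank_le_of_forall_vanishesTo_eq_zero (U : Submodule K (MvPolynomial (Fin n) K))
    (S : Finset (Fin n → K)) (k : ℕ)
    (hU : ∀ f ∈ U, (∀ s ∈ S, VanishesTo f s (k + 1)) → f = 0) :
    Module.finrank K U ≤ (k + n).choose n * S.card := by
  let J := {j : Fin n →₀ ℕ // j.degree ≤ k}
  have : Finite J := (Finsupp.finite_of_degree_le k).to_subtype
  have := Fintype.ofFinite J
  let Φ : MvPolynomial (Fin n) K →ₗ[K] (S × J → K) :=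
    LinearMap.pi fun sj => (aeval (sj.1 : Fin n → K)).toLinearMap ∘ₗ mvHasseDerivₗ sj.2.1
  have hΦ : Function.Injective (Φ.domRestrict U) := by
    rw [← LinearMap.ker_eq_bot, LinearMap.ker_eq_bot']
    intro f hf
    refine Subtype.ext (hU f f.2 fun s hs j hj => ?_)
    simpa [Φ, mvHasseDerivₗ] using congrFun hf (⟨s, hs⟩, ⟨j, Nat.lt_succ_iff.mp hj⟩)
  calc Module.finrank K U ≤ Module.finrank K (S × J → K) :=
        LinearMap.finrank_le_finrank_of_injective hΦ
    _ = S.card * Nat.card J := by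
        rw [Module.finrank_fintype_fun_eq_card, Fintype.card_prod, Fintype.card_coe,
          Nat.card_eq_fintype_card]
    _ ≤ (k + n).choose n * S.card := by
        rw [mul_comm]
        exact Nat.mul_le_mul_right _ (natCard_degree_le_le_choose n k)

end Kakeya

/-- A line is a pair `(point, direction)`, and the direction set `D` is the set of directions
of the lines in `L`. -/
theorem kakeya_lower_bound_ideal_general {K : Type*} [Field K] {n N r : ℕ} (hr : 1 ≤ r)
    (L : Finset ((Fin n → K) × (Fin n → K)))
    (S : Finset (Fin n → K))
    (hS : ∀ p ∈ L, ∃ Λ : Finset K, N ≤ Λ.card ∧ ∀ t ∈ Λ, p.1 + t • p.2 ∈ S)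
    (U : Submodule K (MvPolynomial (Fin n) K))
    (hdeg : ∀ f ∈ U, f ≠ 0 → f.totalDegree < r * N)
    (hU : ∀ f ∈ U, f ≠ 0 → ∃ p ∈ L, ∃ j : Fin n →₀ ℕ, (∑ i, j i) < r ∧
      eval p.2 (mvHasseDeriv j (homogeneousComponent f.totalDegree f)) ≠ 0) :
    Module.finrank K U ≤ (2 * r + n - 2).choose n * S.card := by
  have hvanish : ∀ f ∈ U, (∀ s ∈ S, VanishesTo f s (2 * r - 2 + 1)) → f = 0 := by
    intro f hfU hfS
    by_contra hf
    obtain ⟨p, hpL, j, hj, hne⟩ := hU f hfU hf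
    obtain ⟨Λ, hΛ, hΛS⟩ := hS p hpL
    refine hne (eval_mvHasseDeriv_homogeneousComponent_eq_zero (r := r)
      (fun t ht => (hfS _ (hΛS t ht)).mono (by omega)) ?_ (by rwa [Finsupp.degree_eq_sum]))
    exact (hdeg f hfU hf).trans_le (Nat.mul_le_mul_left r hΛ)
  calc Module.finrank K U ≤ (2 * r - 2 + n).choose n * S.card :=
        finrank_le_of_forall_vanishesTo_eq_zero U S _ hvanish
    _ = (2 * r + n - 2).choose n * S.card := by rw [show 2 * r - 2 + n = 2 * r + n - 2 by omega]

/-- Lines are given as pairs `(point, direction)` with nonzero direction; every line of `L`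
contains at least `N` points of `S`; `U` is a subspace of polynomials of degree `≤ rN - 1`
such that no nonzero `f ∈ U` has top-degree part `f*` vanishing to multiplicity `r` at every
direction of a line of `L`.  Then `binom (2r+n-2) n * |S| ≥ dim U`. -/
theorem kakeya_lower_bound_ideal {K : Type*} [Field K] {n N r : ℕ} (hr : 1 ≤ r)
    (L : Finset ((Fin n → K) × (Fin n → K))) (hL : ∀ p ∈ L, p.2 ≠ 0)
    (S : Finset (Fin n → K))
    (hS : ∀ p ∈ L, ∃ Λ : Finset K, N ≤ Λ.card ∧ ∀ t ∈ Λ, p.1 + t • p.2 ∈ S)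
    (U : Submodule K (MvPolynomial (Fin n) K))
    (hdeg : ∀ f ∈ U, f ≠ 0 → f.totalDegree < r * N)
    (hU : ∀ f ∈ U, f ≠ 0 → ∃ p ∈ L, ∃ j : Fin n →₀ ℕ, (∑ i, j i) < r ∧
      eval p.2 (mvHasseDeriv j (homogeneousComponent f.totalDegree f)) ≠ 0) :
    Module.finrank K U ≤ (2 * r + n - 2).choose n * S.card :=
  kakeya_lower_bound_ideal_general hr L S hS U hdeg hU
end

section
/- Let A_1, ..., A_{n-1} be subsets of a field K each of size N, and let D be the grid of directions { <(a_1,...,a_{n-1},1)> : a_i \in A_i } in PG_{n-1}(K). Let g be a nonzero homogeneous polynomial in K[X_1,...,X_n] vanishing to multiplicity at least r at every point of D. Then deg g \geq rN. -/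
open MvPolynomial

/-!
The affine analogue, for a polynomial `f` vanishing on a full grid, holds by induction on the
number of variables. Write `f` as a polynomial of degree `t` in `X 0` with coefficients in the
other variables, and put `s = t / N`. Fix a point
`a` of the remaining grid and `j'` with `|j'| < r - s`. The univariate polynomial whose
coefficients are the values at `a` of the `∂^j'`-derivatives of the coefficients of `f` vanishes
to order `s + 1` at each of the `N` points of `A 0`, but has degree `t < (s + 1) N`, so it is zero.
Hence the leading coefficient vanishes to order `r - s` on the smaller grid, and induction gives
`deg f ≥ (r - s) N + t ≥ r N`.

For the homogeneous statement set the last variable to `1`: this does not raise the degree, keeps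
a nonzero homogeneous polynomial nonzero, and turns Hasse derivatives at `(a, 1)` into Hasse
derivatives at `a`.
-/

section MvHasseDeriv

variable {K : Type*} [CommSemiring K] {n : ℕ}

theorem mvHasseDeriv_monomial (j c : Fin n →₀ ℕ) (a : K) :
    mvHasseDeriv j (monomial c a) =
      monomial (c - j) (((∏ i, (c i).choose (j i) : ℕ) : K) * a) := by
  have h : ∏ i ∈ j.support, (c i).choose (j i) = ∏ i, (c i).choose (j i) :=
    Finset.prod_subset (Finset.subset_univ _) fun i _ hi => by
      rw [Finsupp.notMem_support_iff.mp hi, Nat.choose_zero_right]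
  rw [mvHasseDeriv, ← h]
  exact sum_monomial_eq (by simp)

theorem mvHasseDeriv_zero' (f : MvPolynomial (Fin n) K) : mvHasseDeriv 0 f = f := by
  induction f using MvPolynomial.induction_on' with
  | monomial c a => simp [mvHasseDeriv_monomial]
  | add f g hf hg => rw [mvHasseDeriv_add, hf, hg]

noncomputable def mvHasseDerivAddHom (j : Fin n →₀ ℕ) :
    MvPolynomial (Fin n) K →+ MvPolynomial (Fin n) K where
  toFun := mvHasseDeriv j
  map_zero' := Finsupp.sum_zero_index
  map_add' := mvHasseDeriv_add j

@[simp]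
theorem mvHasseDerivAddHom_apply (j : Fin n →₀ ℕ) (f : MvPolynomial (Fin n) K) :
    mvHasseDerivAddHom j f = mvHasseDeriv j f := rfl

def VanishesToOrder (f : MvPolynomial (Fin n) K) (r : ℕ) (a : Fin n → K) : Prop :=
  ∀ j : Fin n →₀ ℕ, ∑ i, j i < r → eval a (mvHasseDeriv j f) = 0

theorem VanishesToOrder.eval_eq_zero {f : MvPolynomial (Fin n) K} {r : ℕ} {a : Fin n → K}
    (h : VanishesToOrder f r a) (hr : 0 < r) : eval a f = 0 := by
  simpa [mvHasseDeriv_zero'] using h 0 (by simpa using hr)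

end MvHasseDeriv

namespace Polynomial

theorem X_sub_C_pow_dvd_of_hasseDeriv_eval_eq_zero {R : Type*} [CommRing R] {ρ : ℕ} {u : R[X]}
    {b : R} (h : ∀ k < ρ, (hasseDeriv k u).eval b = 0) : (X - C b) ^ ρ ∣ u := by
  obtain ⟨v, hv⟩ : X ^ ρ ∣ taylor b u :=
    X_pow_dvd_iff.mpr fun k hk => by rw [taylor_coeff]; exact h k hk
  refine ⟨v.comp (X - C b), ?_⟩
  have := congrArg (comp · (X - C b)) hv
  simpa [taylor_apply, comp_assoc, mul_comp] using this

theorem eq_zero_of_hasseDeriv_eval_eq_zero_of_natDegree_lt {K : Type*} [Field K] {ρ : ℕ}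
    {S : Finset K} {u : K[X]} (hvan : ∀ b ∈ S, ∀ k < ρ, (hasseDeriv k u).eval b = 0)
    (hdeg : u.natDegree < ρ * S.card) : u = 0 := by
  have hdvd : ∏ b ∈ S, (X - C b) ^ ρ ∣ u :=
    Finset.prod_dvd_of_coprime
      (fun b _ b' _ hne => (isCoprime_X_sub_C_of_isUnit_sub (sub_ne_zero.mpr hne).isUnit).pow)
      fun b hb => X_sub_C_pow_dvd_of_hasseDeriv_eval_eq_zero (hvan b hb)
  refine eq_zero_of_dvd_of_natDegree_lt hdvd ?_
  rw [natDegree_prod _ _ fun b _ => pow_ne_zero _ (X_sub_C_ne_zero b)]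
  simpa [mul_comm] using hdeg

section MapCoeffs

variable {R S : Type*} [Semiring R] [Semiring S] (L : R →+ S)

noncomputable def mapCoeffs : R[X] →+ S[X] where
  toFun p := p.sum fun k a => monomial k (L a)
  map_zero' := sum_zero_index _
  map_add' p q := sum_add_index p q _ (by simp) (by simp)

@[simp]
theorem coeff_mapCoeffs (p : R[X]) (k : ℕ) : (mapCoeffs L p).coeff k = L (p.coeff k) := by
  simp only [mapCoeffs, AddMonoidHom.coe_mk, ZeroHom.coe_mk, Polynomial.sum, finsetSum_coeff,
    coeff_monomial, Finset.sum_ite_eq', mem_support_iff]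
  split_ifs with h
  · rfl
  · rw [notMem_support_iff.mp h, map_zero]

theorem mapCoeffs_monomial (k : ℕ) (a : R) : mapCoeffs L (monomial k a) = monomial k (L a) :=
  sum_monomial_index (f := fun k a => monomial k (L a)) _ (by simp)

theorem natDegree_mapCoeffs_le (p : R[X]) : (mapCoeffs L p).natDegree ≤ p.natDegree :=
  natDegree_le_iff_coeff_eq_zero.mpr fun k hk => by
    rw [coeff_mapCoeffs, coeff_eq_zero_of_natDegree_lt hk, map_zero]

end MapCoeffs

end Polynomial

section FinSuccEquiv

variable {K : Type*} [CommSemiring K] {m : ℕ}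

theorem finSuccEquiv_monomial (c : Fin (m + 1) →₀ ℕ) (a : K) :
    finSuccEquiv K m (monomial c a) = Polynomial.monomial (c 0) (monomial c.tail a) := by
  ext i d
  rw [finSuccEquiv_coeff_coeff, coeff_monomial, Polynomial.coeff_monomial]
  rcases eq_or_ne (c 0) i with rfl | hi
  · rw [if_pos rfl, coeff_monomial]
    refine if_congr ⟨fun h => ?_, fun h => ?_⟩ rfl rfl
    · rw [h, Finsupp.tail_cons]
    · rw [← h, Finsupp.cons_tail]
  · rw [if_neg hi, coeff_zero, if_neg]
    rintro rfl
    exact hi (Finsupp.cons_zero _ _)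

theorem eval_hasseDeriv_mapCoeffs_finSuccEquiv (f : MvPolynomial (Fin (m + 1)) K)
    (a : Fin m → K) (b : K) (k : ℕ) (j' : Fin m →₀ ℕ) :
    ((Polynomial.hasseDeriv k) (Polynomial.mapCoeffs
        ((eval a).toAddMonoidHom.comp (mvHasseDerivAddHom j')) (finSuccEquiv K m f))).eval b =
      eval (Fin.cons b a) (mvHasseDeriv (Finsupp.cons k j') f) := by
  induction f using MvPolynomial.induction_on' with
  | add p q hp hq =>
    rw [map_add, map_add, map_add, Polynomial.eval_add, hp, hq, mvHasseDeriv_add, map_add]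
  | monomial c α =>
    rw [finSuccEquiv_monomial, Polynomial.mapCoeffs_monomial, Polynomial.hasseDeriv_monomial,
      Polynomial.eval_monomial, AddMonoidHom.comp_apply, mvHasseDerivAddHom_apply,
      RingHom.toAddMonoidHom_eq_coe, AddMonoidHom.coe_coe, mvHasseDeriv_monomial,
      mvHasseDeriv_monomial, eval_monomial, eval_monomial,
      Finsupp.prod_fintype _ _ fun i => pow_zero _, Finsupp.prod_fintype _ _ fun i => pow_zero _,
      Fin.prod_univ_succ (f := fun i => (Fin.cons b a : Fin (m + 1) → K) i ^ (c - _) i),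
      Fin.prod_univ_succ (f := fun i => (c i).choose (Finsupp.cons k j' i))]
    simp only [Finsupp.cons_zero, Finsupp.cons_succ, Fin.cons_zero, Fin.cons_succ,
      Finsupp.tsub_apply, Finsupp.tail_apply]
    push_cast
    ring

end FinSuccEquiv

section Grid

variable {K : Type*} [Field K]

theorem VanishesToOrder.coeff_finSuccEquiv {m r s : ℕ} {f : MvPolynomial (Fin (m + 1)) K}
    {S : Finset K} {a : Fin m → K} (hvan : ∀ b ∈ S, VanishesToOrder f r (Fin.cons b a))
    (hdeg : (finSuccEquiv K m f).natDegree < (s + 1) * S.card) (k : ℕ) :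
    VanishesToOrder ((finSuccEquiv K m f).coeff k) (r - s) a := by
  intro j' hj'
  set L := (eval a).toAddMonoidHom.comp (mvHasseDerivAddHom j')
  have hu : Polynomial.mapCoeffs L (finSuccEquiv K m f) = 0 := by
    refine Polynomial.eq_zero_of_hasseDeriv_eval_eq_zero_of_natDegree_lt (fun b hb i hi => ?_)
      ((Polynomial.natDegree_mapCoeffs_le _ _).trans_lt hdeg)
    rw [eval_hasseDeriv_mapCoeffs_finSuccEquiv]
    refine hvan b hb _ ?_
    rw [Fin.sum_univ_succ]
    simp only [Finsupp.cons_zero, Finsupp.cons_succ]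
    omega
  simpa [L] using congrArg (Polynomial.coeff · k) hu

theorem mul_le_totalDegree_of_vanishesToOrder_on_grid {n N r : ℕ} (A : Fin n → Finset K)
    (hA : ∀ i, N ≤ (A i).card) {f : MvPolynomial (Fin n) K} (hf : f ≠ 0)
    (hvan : ∀ a : Fin n → K, (∀ i, a i ∈ A i) → VanishesToOrder f r a) :
    r * N ≤ f.totalDegree := by
  induction n generalizing r with
  | zero =>
    rcases Nat.eq_zero_or_pos r with rfl | hr
    · simp
    obtain ⟨x, rfl⟩ := C_surjective (Fin 0) f
    have := (hvan Fin.elim0 fun i => i.elim0).eval_eq_zero hr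
    simp_all
  | succ n ih =>
    rcases Nat.eq_zero_or_pos N with rfl | hN
    · simp
    set p := finSuccEquiv K n f
    set t := p.natDegree
    have hq : p.coeff t ≠ 0 :=
      Polynomial.leadingCoeff_ne_zero.mpr ((map_ne_zero_iff _ (finSuccEquiv K n).injective).mpr hf)
    have hdeg : t < (t / N + 1) * (A 0).card :=
      (Nat.lt_div_mul_add hN).trans_le (by rw [add_mul, one_mul]; gcongr <;> exact hA 0)
    have hcoeff := ih (fun i => A i.succ) (fun i => hA i.succ) hq fun a ha =>
      VanishesToOrder.coeff_finSuccEquiv (fun b hb => hvan _ (Fin.cases hb ha)) hdeg t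
    calc r * N ≤ (r - t / N) * N + t / N * N := by
          rw [← add_mul]; exact Nat.mul_le_mul_right _ le_tsub_add
      _ ≤ (p.coeff t).totalDegree + t := add_le_add hcoeff (Nat.div_mul_le_self t N)
      _ ≤ f.totalDegree := totalDegree_coeff_finSuccEquiv_add_le f t hq

end Grid

namespace Finsupp

variable {M : Type*} {n : ℕ}

noncomputable def init [Zero M] (s : Fin (n + 1) →₀ M) : Fin n →₀ M :=
  equivFunOnFinite.symm (Fin.init s)

noncomputable def snoc [Zero M] (s : Fin n →₀ M) (y : M) : Fin (n + 1) →₀ M :=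
  equivFunOnFinite.symm (Fin.snoc s y)

@[simp]
theorem init_apply [Zero M] (s : Fin (n + 1) →₀ M) (i : Fin n) : init s i = s i.castSucc := rfl

@[simp]
theorem snoc_castSucc [Zero M] (s : Fin n →₀ M) (y : M) (i : Fin n) :
    snoc s y i.castSucc = s i :=
  Fin.snoc_castSucc (α := fun _ => M) ..

@[simp]
theorem snoc_last [Zero M] (s : Fin n →₀ M) (y : M) : snoc s y (Fin.last n) = y :=
  Fin.snoc_last (α := fun _ => M) ..

theorem degree_init_add [AddCommMonoid M] (s : Fin (n + 1) →₀ M) :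
    (init s).degree + s (Fin.last n) = s.degree := by
  simp [degree_eq_sum, Fin.sum_univ_castSucc]

theorem eq_of_init_eq_of_degree_eq [AddCancelCommMonoid M] {s t : Fin (n + 1) →₀ M}
    (h : init s = init t) (hd : s.degree = t.degree) : s = t := by
  have hlast : s (Fin.last n) = t (Fin.last n) := by
    rw [← degree_init_add, ← degree_init_add, h] at hd
    exact add_left_cancel hd
  ext i
  exact Fin.lastCases hlast (fun i => by simpa using congr($h i)) i

end Finsupp

section Dehomogenize

variable {K : Type*} [CommSemiring K] {m : ℕ}

noncomputable def dehomogenize (g : MvPolynomial (Fin (m + 1)) K) : MvPolynomial (Fin m) K :=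
  aeval (Fin.snoc X 1) g

theorem dehomogenize_monomial (c : Fin (m + 1) →₀ ℕ) (a : K) :
    dehomogenize (monomial c a) = monomial c.init a := by
  rw [dehomogenize, aeval_monomial, monomial_eq, Finsupp.prod_fintype _ _ fun i => pow_zero _,
    Finsupp.prod_fintype _ _ fun i => pow_zero _, Fin.prod_univ_castSucc]
  simp [algebraMap_eq]

theorem dehomogenize_eq_sum (g : MvPolynomial (Fin (m + 1)) K) :
    dehomogenize g = ∑ c ∈ g.support, monomial c.init (coeff c g) := by
  conv_lhs => rw [g.as_sum]
  simp only [dehomogenize, map_sum]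
  exact Finset.sum_congr rfl fun c _ => dehomogenize_monomial c _

theorem totalDegree_dehomogenize_le (g : MvPolynomial (Fin (m + 1)) K) :
    (dehomogenize g).totalDegree ≤ g.totalDegree := by
  rw [dehomogenize_eq_sum]
  refine totalDegree_finsetSum_le fun c hc => (totalDegree_monomial_le _ _).trans ?_
  calc c.init.degree ≤ c.degree := (Finsupp.degree_init_add c).symm ▸ le_self_add
    _ ≤ g.totalDegree := le_totalDegree hc

theorem MvPolynomial.IsHomogeneous.coeff_dehomogenize {g : MvPolynomial (Fin (m + 1)) K} {d : ℕ}
    (hg : g.IsHomogeneous d) {c : Fin (m + 1) →₀ ℕ} (hc : c.degree = d) :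
    coeff c.init (dehomogenize g) = coeff c g := by
  rw [dehomogenize_eq_sum, coeff_sum, Finset.sum_eq_single c, coeff_monomial, if_pos rfl]
  · intro b hb hbc
    rw [coeff_monomial, if_neg]
    refine fun h => hbc (Finsupp.eq_of_init_eq_of_degree_eq h ?_)
    rw [hc, Finsupp.degree_eq_weight_one]
    exact hg (mem_support_iff.mp hb)
  · intro hc
    rw [notMem_support_iff.mp hc, map_zero, coeff_zero]

theorem MvPolynomial.IsHomogeneous.dehomogenize_ne_zero {g : MvPolynomial (Fin (m + 1)) K} {d : ℕ}
    (hg : g.IsHomogeneous d) (hg0 : g ≠ 0) : dehomogenize g ≠ 0 := by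
  obtain ⟨c, hc⟩ := exists_coeff_ne_zero hg0
  have hdeg : c.degree = d := by rw [Finsupp.degree_eq_weight_one]; exact hg hc
  exact ne_zero_iff.mpr ⟨c.init, hg.coeff_dehomogenize hdeg ▸ hc⟩

theorem eval_mvHasseDeriv_dehomogenize (g : MvPolynomial (Fin (m + 1)) K) (a : Fin m → K)
    (j : Fin m →₀ ℕ) :
    eval a (mvHasseDeriv j (dehomogenize g)) = eval (Fin.snoc a 1) (mvHasseDeriv (j.snoc 0) g) := by
  induction g using MvPolynomial.induction_on' with
  | add p q hp hq =>
    rw [dehomogenize, map_add, mvHasseDeriv_add, map_add, ← dehomogenize, ← dehomogenize, hp, hq,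
      mvHasseDeriv_add, map_add]
  | monomial c α =>
    rw [dehomogenize_monomial, mvHasseDeriv_monomial, mvHasseDeriv_monomial,
      eval_monomial, eval_monomial,
      Finsupp.prod_fintype _ _ fun i => pow_zero _, Finsupp.prod_fintype _ _ fun i => pow_zero _,
      Fin.prod_univ_castSucc (f := fun i => (Fin.snoc a 1 : Fin (m + 1) → K) i ^ (c - _) i),
      Fin.prod_univ_castSucc (f := fun i => (c i).choose (j.snoc 0 i))]
    simp only [Finsupp.tsub_apply, Finsupp.init_apply, Finsupp.snoc_castSucc, Finsupp.snoc_last,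
      Fin.snoc_castSucc, Fin.snoc_last, Nat.choose_zero_right, one_pow, mul_one]

end Dehomogenize

/-- A nonzero homogeneous polynomial in `m + 1` variables vanishing to multiplicity at least
`r` at every point `⟨(a_1, …, a_m, 1)⟩` of an `N^m` grid of directions has degree `≥ rN`. -/
theorem homogeneous_vanishing_on_grid_degree_bound {K : Type*} [Field K] {m N r d : ℕ}
    (A : Fin m → Finset K) (hA : ∀ i, (A i).card = N)
    (g : MvPolynomial (Fin (m + 1)) K) (hg0 : g ≠ 0) (hgh : g.IsHomogeneous d)
    (hvan : ∀ a : Fin m → K, (∀ i, a i ∈ A i) →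
      ∀ j : Fin (m + 1) →₀ ℕ, (∑ i, j i) < r →
        eval (Fin.snoc a (1 : K)) (mvHasseDeriv j g) = 0) :
    r * N ≤ g.totalDegree := by
  refine le_trans ?_ (totalDegree_dehomogenize_le g)
  refine mul_le_totalDegree_of_vanishesToOrder_on_grid A (fun i => (hA i).ge)
    (hgh.dehomogenize_ne_zero hg0) fun a ha j hj => ?_
  rw [eval_mvHasseDeriv_dehomogenize]
  refine hvan a ha _ ?_
  simpa [Fin.sum_univ_castSucc] using hj
end

section
/- Let K be a field, let d_1, ..., d_n be elements of K, and define points p_j in PG_{j+1}(K) (homogeneous coordinates of length j+2, padded with zeros) recursively for j = 1, ..., n as follows: p_1 = <(1, d_1, 0, ..., 0)>, and with x_{j+2} = <e_{j+2}> and y_{j+2} = <e_{j+1} + e_{j+2}> (e_i the standard basis), given the points p(d_1,...,d_j) and p(d_1,...,d_{j-1},d_{j+1}), set p(d_1,...,d_{j+1}) = (p(d_1,...,d_j) \oplus x_{j+2}) \cap (p(d_1,...,d_{j-1},d_{j+1}) \oplus y_{j+2}). Then p(d_1,...,d_{j+1}) has homogeneous coordinates (1, d_1, c_3, c_4, ...,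 c_{j+2}, 0, ..., 0) where c_i = (-1)^i (d_{i-1} - d_{i-2}) for 3 \leq i \leq j+2. -/
/-- The homogeneous coordinate vector (of length `n + 2`, padded with zeros) of the point
`p(d 1, …, d (j+1))`: coordinates `(1, d 1, c_3, …, c_(j+2), 0, …, 0)` with
`c_i = (-1)^i (d (i-1) - d (i-2))`, i.e. at zero-based index `k` (for `2 ≤ k ≤ j + 1`) the
entry `(-1)^(k+1) (d k - d (k-1))`. -/
noncomputable def gridVec (K : Type*) [Field K] (n : ℕ) (d : ℕ → K) (j : ℕ) :
    Fin (n + 2) → K :=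
  fun k => if (k : ℕ) = 0 then 1 else if (k : ℕ) = 1 then d 1
    else if (k : ℕ) ≤ j + 1 then (-1) ^ ((k : ℕ) + 1) * (d (k : ℕ) - d ((k : ℕ) - 1)) else 0

/-- The recursively defined points `p(d_1, …, d_{j+1}) =
(p(d_1,…,d_j) ⊕ x_{j+2}) ∩ (p(d_1,…,d_{j-1},d_{j+1}) ⊕ y_{j+2})`, with `x_{j+2} = ⟨e_{j+2}⟩`
and `y_{j+2} = ⟨e_{j+1} + e_{j+2}⟩`, have homogeneous coordinates
`(1, d_1, c_3, …, c_{j+2}, 0, …, 0)` where `c_i = (-1)^i (d_{i-1} - d_{i-2})`: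
the span of the claimed coordinate vector is exactly the intersection appearing in the
recursion. -/
theorem gridVec_recursion (K : Type*) [Field K] (n j : ℕ) (hj1 : 1 ≤ j) (hjn : j ≤ n)
    (d : ℕ → K) :
    Submodule.span K {gridVec K n d j} =
      (Submodule.span K {gridVec K n d (j - 1)} ⊔
        Submodule.span K {Pi.single (⟨j + 1, by omega⟩ : Fin (n + 2)) (1 : K)}) ⊓
      (Submodule.span K {gridVec K n (fun i => if i = j then d (j + 1) else d i) (j - 1)} ⊔
        Submodule.span K {Pi.single (⟨j, by omega⟩ : Fin (n + 2)) (1 : K) +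
          Pi.single (⟨j + 1, by omega⟩ : Fin (n + 2)) (1 : K)}) := by
  obtain ⟨m, rfl⟩ : ∃ m, j = m + 1 := ⟨j - 1, by omega⟩
  have hm2 : m + 2 < n + 2 := by omega
  have hm1 : m + 1 < n + 2 := by omega
  simp only [Nat.add_sub_cancel]
  set d' : ℕ → K := fun i => if i = m + 1 then d (m + 1 + 1) else d i with hd'
  set e : Fin (n + 2) → K := Pi.single (⟨m + 1 + 1, by omega⟩ : Fin (n + 2)) (1 : K) with he
  set f : Fin (n + 2) → K := Pi.single (⟨m + 1, by omega⟩ : Fin (n + 2)) (1 : K) +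
      Pi.single (⟨m + 1 + 1, by omega⟩ : Fin (n + 2)) (1 : K) with hf
  set c : K := (-1) ^ (m + 1) * (d (m + 2) - d (m + 1)) with hc
  have h1 : gridVec K n d (m + 1) = gridVec K n d m + c • e := by
    funext ⟨k, hk⟩
    simp only [gridVec, he, Pi.add_apply, Pi.smul_apply, Pi.single_apply, smul_eq_mul,
      Fin.mk.injEq]
    split_ifs <;>
      first
        | (exfalso; omega)
        | ring1
        | (obtain rfl : k = m + 2 := by omega
           simp only [hc, show m + 2 - 1 = m + 1 from by omega]
           ring1)
  have h2 : gridVec K n d (m + 1) = gridVec K n d' m + c • f := by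
    funext ⟨k, hk⟩
    simp only [gridVec, hd', he, hf, Pi.add_apply, Pi.smul_apply, Pi.single_apply, smul_eq_mul,
      Fin.mk.injEq]
    split_ifs <;>
      first
        | (exfalso; omega)
        | ring1
        | (obtain rfl : k = m + 2 := by omega
           simp only [hc, show m + 2 - 1 = m + 1 from by omega]
           ring1)
        | (obtain rfl : k = m + 1 := by omega
           simp only [hc, show m + 1 - 1 = m from by omega]
           ring1)
        | (obtain rfl : m = 0 := by omega
           simp only [hc]
           ring1)
  refine le_antisymm (le_inf ?_ ?_) ?_
  · rw [Submodule.span_le, Set.singleton_subset_iff, SetLike.mem_coe, h1]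
    exact Submodule.add_mem _
      (Submodule.mem_sup_left (Submodule.mem_span_singleton_self _))
      (Submodule.mem_sup_right (Submodule.smul_mem _ c (Submodule.mem_span_singleton_self _)))
  · rw [Submodule.span_le, Set.singleton_subset_iff, SetLike.mem_coe, h2]
    exact Submodule.add_mem _
      (Submodule.mem_sup_left (Submodule.mem_span_singleton_self _))
      (Submodule.mem_sup_right (Submodule.smul_mem _ c (Submodule.mem_span_singleton_self _)))
  · intro w hw'
    rw [Submodule.mem_inf] at hw'
    obtain ⟨hwa, hwb⟩ := hw'
    rw [Submodule.mem_sup] at hwa hwb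
    obtain ⟨x, hx, y, hy, rfl⟩ := hwa
    obtain ⟨a, rfl⟩ := Submodule.mem_span_singleton.1 hx
    obtain ⟨b, rfl⟩ := Submodule.mem_span_singleton.1 hy
    obtain ⟨x', hx', y', hy', hw⟩ := hwb
    obtain ⟨a', rfl⟩ := Submodule.mem_span_singleton.1 hx'
    obtain ⟨b', rfl⟩ := Submodule.mem_span_singleton.1 hy'
    have h0 := congrFun hw ⟨0, by omega⟩
    have hJ := congrFun hw ⟨m + 1, by omega⟩
    have hJ1 := congrFun hw ⟨m + 1 + 1, by omega⟩
    simp only [Pi.add_apply, Pi.smul_apply, smul_eq_mul, he, hf, Pi.single_apply,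
      Fin.mk.injEq, gridVec, hd'] at h0 hJ hJ1
    simp only [show m + 1 + 1 = m + 2 from rfl, show m + 1 - 1 = m by omega,
      show m + 2 - 1 = m + 1 by omega, if_true,
      show (0:ℕ) ≠ m + 1 by omega, show (0:ℕ) ≠ m + 2 by omega,
      show m + 1 ≠ m + 2 by omega, show ¬ m + 2 ≤ m + 1 by omega,
      show m + 2 ≠ m + 1 by omega, show m ≠ m + 1 by omega,
      show m + 2 ≠ 0 by omega, show m + 2 ≠ 1 by omega, show m + 1 ≠ 0 by omega,
      if_false, le_refl, mul_one, mul_zero, add_zero, zero_add, mul_ite] at h0 hJ hJ1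
    rw [Submodule.mem_span_singleton]
    refine ⟨a, ?_⟩
    rw [h1, smul_add, smul_smul]
    have hb : a * c = b := by
      rw [hc]
      rcases eq_or_ne m 0 with rfl | hm0
      · simp only [if_pos (show (0:ℕ) + 1 = 1 by norm_num),
          if_pos (show (1:ℕ) = 0 + 1 by norm_num),
          show (0:ℕ) + 1 = 1 from rfl, show (0:ℕ) + 2 = 2 from rfl, if_true] at hJ h0 hJ1 ⊢
        linear_combination -hJ + d 2 * h0 + hJ1
      · rw [if_neg (by omega), if_neg (by omega)] at hJ
        linear_combination -hJ + ((-1:K) ^ (m + 2) * (d (m + 2) - d m)) * h0 + hJ1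
    rw [hb]
end
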